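/- Theorem 2 (spectrum of the single-site leakage transition matrix): let n ≥ 2, let p_1,…,p_n > 0, and let 0 ≤ q_n < q_{n−1} < ⋯ < q_1 be reals; set x_i = 1 − 2q_i and P = ∑_{i=1}^n p_i. Then: (i) det(Q(p,q) − I) = 0; (ii) for each i ∈ {1,…,n−1} there exists λ_i with x_i < λ_i < x_{i+1} and det(Q(p,q) − λ_i·I) = 0; (iii) there exists λ_0 with x_1 − P < λ_0 < min(x_1, x_n − P) and det(Q(p,q) − λ_0·I) = 0. In particular Q(p,q) has n+1 pairwise distinct real eigenvalues λ_0 < λ_1 < ⋯ < λ_{n−1} < 1. -/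

import Mathlib

/-!
Write `xᵢ = 1 - 2 qᵢ` and `P = ∑ pᵢ`. Every column of `Q` sums to `1`, so the all-ones row vector
is a left eigenvector for the eigenvalue `1`. Taking the Schur complement of the diagonal block
`diag (xᵢ - t)` gives, whenever `t` is none of the `xᵢ`,
`det (Q - t I) = (1 - t) f(t)`, where `f(t) = ∏ (xᵢ - t) - ∑ pᵢ ∏_{j ≠ i} (xⱼ - t)
= ∏ (xᵢ - t) (1 - ∑ pᵢ / (xᵢ - t))`.
As `f(xₖ) = -pₖ ∏_{j ≠ k} (xⱼ - xₖ)`, the polynomial `f` changes sign between consecutive `xᵢ`,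
and `f(x₁) < 0 < f(x₁ - P)` because `∑ pᵢ / (xᵢ - t) < 1` at `t = x₁ - P`; the intermediate value
theorem yields the roots. At a root `t < x₁` we have `1 = ∑ pᵢ / (xᵢ - t) > P / (xₙ - t)`, that is
`t < xₙ - P`.
-/

open Matrix Finset

noncomputable section

/-- The (n+1)×(n+1) single-site leakage transition matrix Q(p,q): rows and columns
indexed by 0,1,…,n, with Q₀₀ = 1 − ∑ᵢ pᵢ, Q₀ᵢ = 2qᵢ, Qᵢ₀ = pᵢ, Qᵢᵢ = 1 − 2qᵢ and
Qᵢⱼ = 0 for distinct i, j ≥ 1. -/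
def Qmat {n : ℕ} (p q : Fin n → ℝ) : Matrix (Fin (n + 1)) (Fin (n + 1)) ℝ :=
  Matrix.of fun a b =>
    Fin.cases (motive := fun _ => ℝ)
      (Fin.cases (motive := fun _ => ℝ) (1 - ∑ i, p i) (fun j => 2 * q j) b)
      (fun i =>
        Fin.cases (motive := fun _ => ℝ) (p i)
          (fun j => if i = j then 1 - 2 * q i else 0) b)
      a

theorem exists_mem_Ioo_eq_zero_of_mul_neg {α : Type*} [ConditionallyCompleteLinearOrder α]
    [TopologicalSpace α] [OrderTopology α] [DenselyOrdered α] {f : α → ℝ} {a b : α}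
    (hab : a ≤ b) (hf : ContinuousOn f (Set.Icc a b)) (h : f a * f b < 0) :
    ∃ c ∈ Set.Ioo a b, f c = 0 := by
  rcases mul_neg_iff.1 h with ⟨ha, hb⟩ | ⟨ha, hb⟩
  · exact intermediate_value_Ioo' hab hf ⟨hb, ha⟩
  · exact intermediate_value_Ioo hab hf ⟨ha, hb⟩

theorem StrictMono.apply_ne_of_covBy {ι : Type*} [LinearOrder ι] {x : ι → ℝ} (hx : StrictMono x)
    {i j : ι} (hij : i ⋖ j) {t : ℝ} (ht : t ∈ Set.Ioo (x i) (x j)) (l : ι) : x l ≠ t := by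
  rintro rfl
  rcases le_or_gt l i with h | h
  · exact (hx.monotone h).not_gt ht.1
  · exact (hx.monotone (hij.ge_of_gt h)).not_gt ht.2

theorem det_fromBlocks_diagonal {K ι : Type*} [Field K] [Fintype ι] [DecidableEq ι]
    (d b c : ι → K) (a : K) (hd : ∀ i, d i ≠ 0) :
    (fromBlocks (diagonal d) (of fun i (_ : Unit) => b i) (of fun (_ : Unit) j => c j)
      (of fun _ _ => a)).det = (∏ i, d i) * (a - ∑ i, c i * b i / d i) := by
  let _ : Invertible d := ⟨d⁻¹, funext fun i => inv_mul_cancel₀ (hd i),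
    funext fun i => mul_inv_cancel₀ (hd i)⟩
  let _ := diagonalInvertible d
  have hinv : ⅟d = d⁻¹ := rfl
  rw [det_fromBlocks₁₁, invOf_diagonal_eq, hinv, det_diagonal, det_unique]
  congr 1
  simp only [Matrix.sub_apply, mul_apply, diagonal_apply, mul_ite, mul_zero, sum_ite_eq',
    mem_univ, if_true, of_apply, Pi.inv_apply]
  exact congrArg _ (sum_congr rfl fun i _ => by field_simp)

theorem exists_strictMono_of_interlacing {n : ℕ} (hn : 0 < n) (x : Fin n → ℝ) (E : ℝ → Prop)
    (hE : E 1) (hlast : x ⟨n - 1, by omega⟩ ≤ 1)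
    (hgap : ∀ (i : Fin n) (h : (i : ℕ) + 1 < n), ∃ lam, x i < lam ∧ lam < x ⟨i + 1, h⟩ ∧ E lam)
    (hfirst : ∃ lam, lam < x ⟨0, hn⟩ ∧ E lam) :
    ∃ lam : Fin (n + 1) → ℝ, StrictMono lam ∧ lam (Fin.last n) = 1 ∧ ∀ k, E (lam k) := by
  choose r hr using hgap
  obtain ⟨l₀, hl₀, hEl₀⟩ := hfirst
  let lam : Fin (n + 1) → ℝ := Fin.cons l₀ fun i => if h : (i : ℕ) + 1 < n then r i h else 1
  have hlam (i : Fin n) : lam i.succ = if h : (i : ℕ) + 1 < n then r i h else 1 :=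
    Fin.cons_succ _ _ _
  have hsucc (i : Fin n) : x i ≤ lam i.succ := by
    rw [hlam]
    split_ifs with h
    · exact (hr i h).1.le
    · rwa [show i = ⟨n - 1, by omega⟩ by ext; simp only; omega]
  have hcastSucc (i : Fin n) : lam i.castSucc < x i := by
    rcases Fin.eq_zero_or_eq_succ i.castSucc with h | ⟨j, hj⟩
    · obtain rfl : i = ⟨0, hn⟩ := by ext; simpa [Fin.ext_iff] using h
      rw [h]
      exact hl₀
    · have hij : (i : ℕ) = j + 1 := by simpa [Fin.ext_iff] using hj
      have hj' : (j : ℕ) + 1 < n := hij ▸ i.isLt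
      obtain rfl : i = ⟨j + 1, hj'⟩ := Fin.ext hij
      rw [hj, hlam, dif_pos hj']
      exact (hr j hj').2.1
  refine ⟨lam, Fin.strictMono_iff_lt_succ.2 fun i => (hcastSucc i).trans_le (hsucc i), ?_, ?_⟩
  · rw [show Fin.last n = (⟨n - 1, by omega⟩ : Fin n).succ by ext; simp; omega, hlam,
      dif_neg (by simp only; omega)]
  · refine Fin.cases hEl₀ fun i => ?_
    rw [hlam]
    split_ifs with h
    · exact (hr i h).2.2
    · exact hE

section SecularPoly

variable {ι : Type*} [Fintype ι] [DecidableEq ι] (x p : ι → ℝ)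

def secularPoly (t : ℝ) : ℝ :=
  ∏ i, (x i - t) - ∑ i, p i * ∏ j ∈ univ.erase i, (x j - t)

theorem continuous_secularPoly : Continuous (secularPoly x p) := by
  unfold secularPoly
  fun_prop

variable {x p}

theorem secularPoly_eq_prod_mul {t : ℝ} (ht : ∀ i, x i ≠ t) :
    secularPoly x p t = (∏ i, (x i - t)) * (1 - ∑ i, p i / (x i - t)) := by
  have hprod : ∀ i, p i * ∏ j ∈ univ.erase i, (x j - t) = (∏ j, (x j - t)) * (p i / (x i - t)) :=
    fun i => by
      rw [← mul_prod_erase univ (fun j => x j - t) (mem_univ i)]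
      field_simp [sub_ne_zero.2 (ht i)]
  simp only [secularPoly, hprod, ← mul_sum, mul_sub, mul_one]

theorem secularPoly_apply_self (k : ι) :
    secularPoly x p (x k) = -(p k * ∏ j ∈ univ.erase k, (x j - x k)) := by
  have hterm : ∀ i ≠ k, p i * ∏ j ∈ univ.erase i, (x j - x k) = 0 := fun i hi =>
    mul_eq_zero_of_right _ (prod_eq_zero (mem_erase.2 ⟨hi.symm, mem_univ k⟩) (sub_self _))
  rw [secularPoly, prod_eq_zero (mem_univ k) (sub_self _),
    sum_eq_single k (fun i _ hi => hterm i hi) (fun h => absurd (mem_univ k) h), zero_sub]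

theorem secularPoly_mul_secularPoly_neg_of_covBy [LinearOrder ι] (hx : StrictMono x)
    (hp : ∀ i, 0 < p i) {i j : ι} (hij : i ⋖ j) :
    secularPoly x p (x i) * secularPoly x p (x j) < 0 := by
  have hji : j ∈ univ.erase i := mem_erase.2 ⟨hij.lt.ne', mem_univ j⟩
  have hij' : i ∈ univ.erase j := mem_erase.2 ⟨hij.lt.ne, mem_univ i⟩
  -- every other `x l` lies outside `[x i, x j]`, so it contributes a positive factor
  have hrest : 0 < ∏ l ∈ (univ.erase j).erase i, ((x l - x i) * (x l - x j)) := by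
    refine prod_pos fun l hl => ?_
    obtain ⟨hli, hlj⟩ := mem_erase.1 hl
    rcases lt_or_gt_of_ne hli with h | h
    · exact mul_pos_of_neg_of_neg (sub_neg.2 (hx h)) (sub_neg.2 (hx (h.trans hij.lt)))
    · have := hx (lt_of_le_of_ne (hij.ge_of_gt h) (mem_erase.1 hlj).1.symm)
      exact mul_pos (sub_pos.2 (hx h)) (sub_pos.2 this)
  have hgap : (x j - x i) * (x i - x j) < 0 :=
    mul_neg_of_pos_of_neg (sub_pos.2 (hx hij.lt)) (sub_neg.2 (hx hij.lt))
  rw [secularPoly_apply_self, secularPoly_apply_self, ← mul_prod_erase _ _ hji,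
    ← mul_prod_erase _ _ hij', erase_right_comm]
  have key : -(p i * ((x j - x i) * ∏ l ∈ (univ.erase j).erase i, (x l - x i))) *
      -(p j * ((x i - x j) * ∏ l ∈ (univ.erase j).erase i, (x l - x j))) =
      p i * p j * ((x j - x i) * (x i - x j)) *
        ∏ l ∈ (univ.erase j).erase i, ((x l - x i) * (x l - x j)) := by
    rw [prod_mul_distrib]; ring
  rw [key]
  exact mul_neg_of_neg_of_pos (mul_neg_of_pos_of_neg (mul_pos (hp i) (hp j)) hgap) hrest

theorem secularPoly_apply_neg_of_forall_lt (hp : ∀ i, 0 < p i) {i₀ : ι}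
    (hmin : ∀ j ≠ i₀, x i₀ < x j) : secularPoly x p (x i₀) < 0 := by
  rw [secularPoly_apply_self, neg_neg_iff_pos]
  exact mul_pos (hp i₀) (prod_pos fun j hj => sub_pos.2 (hmin j (mem_erase.1 hj).1))

theorem secularPoly_sub_sum_pos [Nontrivial ι] (hp : ∀ i, 0 < p i) {i₀ : ι}
    (hmin : ∀ j ≠ i₀, x i₀ < x j) : 0 < secularPoly x p (x i₀ - ∑ i, p i) := by
  set P := ∑ i, p i
  have hP : 0 < P := sum_pos (fun i _ => hp i) univ_nonempty
  have hle : ∀ i, P ≤ x i - (x i₀ - P) := fun i => by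
    rcases eq_or_ne i i₀ with rfl | hi
    · linarith
    · linarith [hmin i hi]
  have hpos : ∀ i, 0 < x i - (x i₀ - P) := fun i => hP.trans_le (hle i)
  obtain ⟨j, hj⟩ := exists_ne i₀
  have hsum : ∑ i, p i / (x i - (x i₀ - P)) < ∑ i, p i / P :=
    sum_lt_sum (fun i _ => div_le_div_of_nonneg_left (hp i).le hP (hle i))
      ⟨j, mem_univ j, div_lt_div_of_pos_left (hp j) hP (by linarith [hmin j hj])⟩
  rw [← sum_div, div_self hP.ne'] at hsum
  rw [secularPoly_eq_prod_mul fun i => (sub_pos.1 (hpos i)).ne']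
  exact mul_pos (prod_pos fun i _ => hpos i) (sub_pos.2 hsum)

theorem lt_sub_sum_of_secularPoly_eq_zero [Nontrivial ι] (hp : ∀ i, 0 < p i) {iₘ : ι}
    (hmax : ∀ j ≠ iₘ, x j < x iₘ) {t : ℝ} (ht : ∀ i, t < x i) (hf : secularPoly x p t = 0) :
    t < x iₘ - ∑ i, p i := by
  have hpos : ∀ i, 0 < x i - t := fun i => sub_pos.2 (ht i)
  rw [secularPoly_eq_prod_mul fun i => (ht i).ne', mul_eq_zero, sub_eq_zero] at hf
  have hsum : ∑ i, p i / (x i - t) = 1 :=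
    (hf.resolve_left (prod_pos fun i _ => hpos i).ne').symm
  obtain ⟨j, hj⟩ := exists_ne iₘ
  have hlt : ∑ i, p i / (x iₘ - t) < ∑ i, p i / (x i - t) :=
    sum_lt_sum
      (fun i _ => div_le_div_of_nonneg_left (hp i).le (hpos i) (by
        rcases eq_or_ne i iₘ with rfl | hi
        · rfl
        · linarith [hmax i hi]))
      ⟨j, mem_univ j, div_lt_div_of_pos_left (hp j) (hpos j) (by linarith [hmax j hj])⟩
  rw [← sum_div, hsum, div_lt_one (hpos iₘ)] at hlt
  linarith

theorem exists_secularPoly_eq_zero_of_covBy [LinearOrder ι] (hx : StrictMono x)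
    (hp : ∀ i, 0 < p i) {i j : ι} (hij : i ⋖ j) :
    ∃ t ∈ Set.Ioo (x i) (x j), secularPoly x p t = 0 :=
  exists_mem_Ioo_eq_zero_of_mul_neg (hx hij.lt).le (continuous_secularPoly x p).continuousOn
    (secularPoly_mul_secularPoly_neg_of_covBy hx hp hij)

theorem exists_secularPoly_eq_zero_of_forall_lt [Nontrivial ι] (hp : ∀ i, 0 < p i) {i₀ : ι}
    (hmin : ∀ j ≠ i₀, x i₀ < x j) :
    ∃ t ∈ Set.Ioo (x i₀ - ∑ i, p i) (x i₀), secularPoly x p t = 0 :=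
  exists_mem_Ioo_eq_zero_of_mul_neg (sub_le_self _ (sum_nonneg fun i _ => (hp i).le))
    (continuous_secularPoly x p).continuousOn
    (mul_neg_of_pos_of_neg (secularPoly_sub_sum_pos hp hmin)
      (secularPoly_apply_neg_of_forall_lt hp hmin))

end SecularPoly

theorem det_Qmat_sub_smul {n : ℕ} (p q : Fin n → ℝ) {t : ℝ} (ht : ∀ i, 1 - 2 * q i ≠ t) :
    (Qmat p q - t • (1 : Matrix (Fin (n + 1)) (Fin (n + 1)) ℝ)).det =
      (1 - t) * secularPoly (fun i => 1 - 2 * q i) p t := by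
  let e : Fin (n + 1) ≃ Fin n ⊕ Unit := (finSuccEquiv n).trans (Equiv.optionEquivSumPUnit _)
  have hblocks : Qmat p q - t • (1 : Matrix (Fin (n + 1)) (Fin (n + 1)) ℝ) =
      (fromBlocks (diagonal fun i => 1 - 2 * q i - t) (of fun i (_ : Unit) => p i)
        (of fun (_ : Unit) j => 2 * q j) (of fun _ _ => 1 - ∑ i, p i - t)).submatrix e e := by
    ext a b
    cases a using Fin.cases <;> cases b using Fin.cases <;>
      simp [e, Qmat, one_apply, diagonal_apply, Fin.succ_ne_zero, eq_comm, ite_sub_ite]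
  have hd : ∀ i, 1 - 2 * q i - t ≠ 0 := fun i => sub_ne_zero.2 (ht i)
  have hterm : ∀ i, 2 * q i * p i / (1 - 2 * q i - t) = (1 - t) * (p i / (1 - 2 * q i - t)) - p i :=
    fun i => by field_simp [hd i]; ring
  rw [hblocks, det_submatrix_equiv_self, det_fromBlocks_diagonal _ _ _ _ hd,
    secularPoly_eq_prod_mul ht, sum_congr rfl fun i _ => hterm i, sum_sub_distrib, ← mul_sum]
  ring

theorem det_Qmat_sub_one {n : ℕ} (p q : Fin n → ℝ) :
    (Qmat p q - (1 : ℝ) • (1 : Matrix (Fin (n + 1)) (Fin (n + 1)) ℝ)).det = 0 := by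
  refine exists_vecMul_eq_zero_iff.1 ⟨fun _ => 1, one_ne_zero, ?_⟩
  ext b
  cases b using Fin.cases <;> simp [vecMul, dotProduct, Fin.sum_univ_succ, Qmat, one_apply]

theorem det_Qmat_sub_smul_eq_zero {n : ℕ} {p q : Fin n → ℝ} {t : ℝ}
    (hf : secularPoly (fun i => 1 - 2 * q i) p t = 0) (ht : ∀ i, 1 - 2 * q i ≠ t) :
    (Qmat p q - t • (1 : Matrix (Fin (n + 1)) (Fin (n + 1)) ℝ)).det = 0 := by
  rw [det_Qmat_sub_smul p q ht, hf, mul_zero]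

theorem exists_det_Qmat_sub_smul_eq_zero_of_covBy {n : ℕ} {p q : Fin n → ℝ}
    (hx : StrictMono fun i => 1 - 2 * q i) (hp : ∀ i, 0 < p i) {i j : Fin n} (hij : i ⋖ j) :
    ∃ lam ∈ Set.Ioo (1 - 2 * q i) (1 - 2 * q j),
      (Qmat p q - lam • (1 : Matrix (Fin (n + 1)) (Fin (n + 1)) ℝ)).det = 0 := by
  obtain ⟨t, ht, hf⟩ := exists_secularPoly_eq_zero_of_covBy hx hp hij
  exact ⟨t, ht, det_Qmat_sub_smul_eq_zero hf (hx.apply_ne_of_covBy hij ht)⟩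

theorem exists_det_Qmat_sub_smul_eq_zero_lt_bot {n : ℕ} [Nontrivial (Fin n)] {p q : Fin n → ℝ}
    (hx : StrictMono fun i => 1 - 2 * q i) (hp : ∀ i, 0 < p i) {i₀ iₘ : Fin n}
    (h₀ : IsBot i₀) (hₘ : IsTop iₘ) :
    ∃ lam ∈ Set.Ioo (1 - 2 * q i₀ - ∑ i, p i) (min (1 - 2 * q i₀) (1 - 2 * q iₘ - ∑ i, p i)),
      (Qmat p q - lam • (1 : Matrix (Fin (n + 1)) (Fin (n + 1)) ℝ)).det = 0 := by
  obtain ⟨t, ht, hf⟩ := exists_secularPoly_eq_zero_of_forall_lt (x := fun i => 1 - 2 * q i) hp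
    fun j hj => hx ((h₀ j).lt_of_ne' hj)
  have hlt (i : Fin n) : t < 1 - 2 * q i := ht.2.trans_le (hx.monotone (h₀ i))
  refine ⟨t, ⟨ht.1, lt_min ht.2 ?_⟩, det_Qmat_sub_smul_eq_zero hf fun i => (hlt i).ne'⟩
  exact lt_sub_sum_of_secularPoly_eq_zero (x := fun i => 1 - 2 * q i) hp
    (fun j hj => hx ((hₘ j).lt_of_ne hj)) hlt hf

/-- Theorem 2 (spectrum of the single-site leakage transition matrix): with
pᵢ > 0, 0 ≤ qₙ < ⋯ < q₁, xᵢ = 1 − 2qᵢ and P = ∑ᵢ pᵢ, the matrix Q(p,q) has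
eigenvalue 1, an eigenvalue in each interval (xᵢ, xᵢ₊₁), and an eigenvalue in
(x₁ − P, min(x₁, xₙ − P)); in particular it has n+1 pairwise distinct real
eigenvalues λ₀ < λ₁ < ⋯ < λ_{n−1} < 1. -/
theorem single_site_leakage_spectrum (n : ℕ) (hn : 2 ≤ n) (p q : Fin n → ℝ)
    (hp : ∀ i, 0 < p i)
    (hq : ∀ i j : Fin n, i < j → q j < q i)
    (hq0 : 0 ≤ q ⟨n - 1, by omega⟩) :
    (Qmat p q - (1 : ℝ) • (1 : Matrix (Fin (n + 1)) (Fin (n + 1)) ℝ)).det = 0 ∧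
    (∀ (i : Fin n) (h : (i : ℕ) + 1 < n),
      ∃ lam : ℝ, 1 - 2 * q i < lam ∧ lam < 1 - 2 * q ⟨(i : ℕ) + 1, h⟩ ∧
        (Qmat p q - lam • (1 : Matrix (Fin (n + 1)) (Fin (n + 1)) ℝ)).det = 0) ∧
    (∃ lam : ℝ,
      (1 - 2 * q ⟨0, by omega⟩) - (∑ i, p i) < lam ∧
      lam < min (1 - 2 * q ⟨0, by omega⟩) ((1 - 2 * q ⟨n - 1, by omega⟩) - ∑ i, p i) ∧
      (Qmat p q - lam • (1 : Matrix (Fin (n + 1)) (Fin (n + 1)) ℝ)).det = 0) ∧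
    (∃ lam : Fin (n + 1) → ℝ, StrictMono lam ∧ lam (Fin.last n) = 1 ∧
      ∀ k, (Qmat p q - lam k • (1 : Matrix (Fin (n + 1)) (Fin (n + 1)) ℝ)).det = 0) := by
  have hx : StrictMono fun i => 1 - 2 * q i := fun i j hij => by linarith [hq i j hij]
  have hgap (i : Fin n) (h : (i : ℕ) + 1 < n) : ∃ lam : ℝ, 1 - 2 * q i < lam ∧
      lam < 1 - 2 * q ⟨(i : ℕ) + 1, h⟩ ∧
      (Qmat p q - lam • (1 : Matrix (Fin (n + 1)) (Fin (n + 1)) ℝ)).det = 0 := by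
    have hcov : i ⋖ ⟨i + 1, h⟩ :=
      ⟨Fin.lt_def.2 (Nat.lt_succ_self i), fun j h₁ h₂ => by
        rw [Fin.lt_def] at h₁ h₂
        simp only at h₂
        omega⟩
    obtain ⟨t, ht, hdet⟩ := exists_det_Qmat_sub_smul_eq_zero_of_covBy hx hp hcov
    exact ⟨t, ht.1, ht.2, hdet⟩
  have := Fin.nontrivial_iff_two_le.2 hn
  obtain ⟨t₀, ht₀, hdet₀⟩ := exists_det_Qmat_sub_smul_eq_zero_lt_bot hx hp
    (i₀ := ⟨0, by omega⟩) (iₘ := ⟨n - 1, by omega⟩) (fun j => Fin.le_def.2 j.val.zero_le)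
    (fun j => Fin.le_def.2 (Nat.le_sub_one_of_lt j.isLt))
  refine ⟨det_Qmat_sub_one p q, hgap, ⟨t₀, ht₀.1, ht₀.2, hdet₀⟩,
    exists_strictMono_of_interlacing (by omega) (fun i => 1 - 2 * q i)
      (fun lam => (Qmat p q - lam • (1 : Matrix (Fin (n + 1)) (Fin (n + 1)) ℝ)).det = 0)
      (det_Qmat_sub_one p q) (by linarith) hgap ⟨t₀, (lt_min_iff.1 ht₀.2).1, hdet₀⟩⟩
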